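/- If the greedy policy π^g transmits a packet j at speed strictly greater than 3W/D, then π^g begins transmitting packet j immediately at its generation time t_j and completes the transmission exactly at the deadline d(t_j), i.e., it transmits packet j at constant speed W/(d(t_j) − t_j) over the interval [t_j, d(t_j)). -/

import Mathlib

/-
Every greedy transmission has speed at least `3W/D`, hence lasts at most `D/3`. While a
packet `k` waits between its generation `t_k` and the start of its transmission, the node
is never idle (`k` is available), and each transmission covering that wait began before
`t_k`: otherwise the later packet `k` would have been chosen. Hence every packet starts at
most `D/3` after it is generated.

If packet `j` is sent faster than `3W/D`, its start `r` satisfies `d(r) - r < D/3`, i.e.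
`μ(r) < r - 2D/3`. If `r > t_j`, the transmission running shortly after
`max(t_j, μ(r) + 2D/3)` belongs to a packet `i` delivered by `r`, so `t_i ≤ μ(r)`; but it
started later than `μ(r) + D/3 ≥ t_i + D/3`, which is impossible. So `r = t_j`, and the
speed `W/(d(r) - r)` delivers `j` exactly at `d(t_j)`.
-/

open MeasureTheory Set

noncomputable section

/-- An increasing convex power function `P : [0,∞) → [0,∞)` with `P 0 = 0`:
transmitting at speed `s ≥ 0` consumes power `P s`. -/
structure PowerFn where
  P : ℝ → ℝ
  mono : StrictMonoOn P (Set.Ici (0:ℝ))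
  convex : ConvexOn ℝ (Set.Ici (0:ℝ)) P
  zero : P 0 = 0
  nonneg : ∀ x, 0 ≤ x → 0 ≤ P x

/-- Global system parameters: packet size `W > 0` (bits), peak-AoI threshold `D > 0`,
and the power function. -/
structure Params where
  W : ℝ
  D : ℝ
  pf : PowerFn
  hW : 0 < W
  hD : 0 < D

/-- A problem instance: time horizon `T`, initial age `Δ0 < D - ε`, and packet
generation times `gen 0 < gen 1 < ⋯` with inter-generation times `< D - ε`. -/
structure Arrivals (pr : Params) where
  T : ℝ
  Δ0 : ℝ
  ε : ℝ
  gen : ℕ → ℝ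
  hT : 0 < T
  hε : 0 < ε
  hΔ0_nonneg : 0 ≤ Δ0
  hΔ0 : Δ0 < pr.D - ε
  gen_nonneg : ∀ i, 0 ≤ gen i
  gen_mono : StrictMono gen
  gen_gap : ∀ i, gen (i + 1) - gen i < pr.D - ε
  gen_first : gen 0 + Δ0 < pr.D - ε

/-- A (realized) transmission schedule on an instance: at each time `t` the node
transmits packet `assign t` (or none) at speed `speed t ≥ 0`; a packet may only be
transmitted after it is generated, and the speed is `0` when the node is idle. -/
structure Schedule (pr : Params) (σ : Arrivals pr) where
  speed : ℝ → ℝ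
  assign : ℝ → Option ℕ
  speed_nonneg : ∀ t, 0 ≤ speed t
  speed_integrable : ∀ a b : ℝ, IntervalIntegrable speed volume a b
  idle_speed : ∀ t, assign t = none → speed t = 0
  assign_after_gen : ∀ t i, assign t = some i → σ.gen i ≤ t

namespace Schedule

variable {pr : Params} {σ : Arrivals pr}

/-- The speed devoted to packet `i` at time `u`. -/
def txSpeed (S : Schedule pr σ) (i : ℕ) : ℝ → ℝ :=
  fun u => if S.assign u = some i then S.speed u else 0

/-- Bits of packet `i` transmitted during the interval `[a, b)`. -/
def bitsIn (S : Schedule pr σ) (i : ℕ) (a b : ℝ) : ℝ :=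
  ∫ u in a..b, S.txSpeed i u

/-- Bits of packet `i` transmitted up to time `t`. -/
def bits (S : Schedule pr σ) (i : ℕ) (t : ℝ) : ℝ := S.bitsIn i 0 t

/-- Packet `i` has been delivered by time `t`: all of its `W` bits are transmitted. -/
def Delivered (S : Schedule pr σ) (i : ℕ) (t : ℝ) : Prop :=
  pr.W ≤ S.bits i t

/-- `μ(t)`: the generation time of the latest packet delivered by time `t`
(equal to `-Δ0` if no packet has been delivered yet). -/
def latest (S : Schedule pr σ) (t : ℝ) : ℝ :=
  sSup (insert (-σ.Δ0) {x | ∃ i, S.Delivered i t ∧ x = σ.gen i})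

/-- The age of information `Δ(t) = t - μ(t)`. -/
def age (S : Schedule pr σ) (t : ℝ) : ℝ := t - S.latest t

/-- The deadline `d(t) = μ(t) + D`. -/
def deadline (S : Schedule pr σ) (t : ℝ) : ℝ := S.latest t + pr.D

/-- Feasibility: the peak-AoI constraint `Δ(t) < D` holds for all `t ∈ [0, T]`. -/
def Feasible (S : Schedule pr σ) : Prop :=
  ∀ t, 0 ≤ t → t ≤ σ.T → S.age t < pr.D

/-- The energy consumed over `[0, T]`. -/
def energy (S : Schedule pr σ) : ℝ :=
  ∫ t in (0:ℝ)..σ.T, pr.pf.P (S.speed t)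

/-- The energy consumed over `[0, T]` while transmitting packets from the set `A`. -/
def energyOn (S : Schedule pr σ) (A : Set ℕ) : ℝ :=
  ∫ t in (0:ℝ)..σ.T,
    Set.indicator {u : ℝ | ∃ j ∈ A, S.assign u = some j}
      (fun u => pr.pf.P (S.speed u)) t

/-- The schedule transmits packet `i` (at least partially). -/
def Transmits (S : Schedule pr σ) (i : ℕ) : Prop := ∃ t, S.assign t = some i

/-- The delivery time of packet `i`. -/
def delTime (S : Schedule pr σ) (i : ℕ) : ℝ := sInf {t | S.Delivered i t}

/-- Packet `i` is fresh at time `t`: generated by time `t`, later than `μ(t)`. -/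
def Fresh (S : Schedule pr σ) (i : ℕ) (t : ℝ) : Prop :=
  σ.gen i ≤ t ∧ S.latest t < σ.gen i

/-- Packet `i` is available at time `t`: fresh and not yet delivered. -/
def Available (S : Schedule pr σ) (i : ℕ) (t : ℝ) : Prop :=
  S.Fresh i t ∧ ¬ S.Delivered i t

/-- The transmission of packet `i` begins at time `r`. -/
def StartsAt (S : Schedule pr σ) (i : ℕ) (r : ℝ) : Prop :=
  S.assign r = some i ∧ ∀ u, u < r → S.assign u ≠ some i

/-- The speed `s^g(t) = max{W/(d(t) - t), 3W/D}` used by the greedy policy. -/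
def gspeed (S : Schedule pr σ) (t : ℝ) : ℝ :=
  max (pr.W / (S.deadline t - t)) (3 * pr.W / pr.D)

/-- The schedule follows the greedy policy `π^g`: it never idles at a time of
`[0,T]` when `d(t) ≤ T` and a fresh undelivered packet is available; whenever it
begins transmitting a packet (at a time with `d(t) ≤ T`), that packet is the
latest available fresh one, and it is transmitted non-preemptively at the constant
speed `s^g(t) = max{W/(d(t)-t), 3W/D}` until all `W` bits are delivered. -/
def IsGreedy (S : Schedule pr σ) : Prop :=
  (∀ t, 0 ≤ t → t ≤ σ.T → S.assign t = none → S.deadline t ≤ σ.T →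
      ¬ ∃ i, S.Available i t) ∧
  (∀ i r, S.StartsAt i r →
      S.deadline r ≤ σ.T ∧ S.Available i r ∧
      (∀ j, S.Available j r → σ.gen j ≤ σ.gen i) ∧
      (∀ u, r ≤ u → u < r + pr.W / S.gspeed r →
        S.assign u = some i ∧ S.speed u = S.gspeed r)) ∧
  (∀ t i, S.assign t = some i →
      ∃ r, S.StartsAt i r ∧ r ≤ t ∧ t < r + pr.W / S.gspeed r)

end Schedule

/-- A policy maps every instance to a schedule. -/
def Policy (pr : Params) := ∀ σ : Arrivals pr, Schedule pr σ

/-- Two instances agree up to time `t`: same horizon, same initial age, and the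
same packet generation times among packets generated by time `t`. -/
def AgreeUpTo (pr : Params) (σ σ' : Arrivals pr) (t : ℝ) : Prop :=
  σ.T = σ'.T ∧ σ.Δ0 = σ'.Δ0 ∧
  ∀ i, (σ.gen i ≤ t ∨ σ'.gen i ≤ t) → σ.gen i = σ'.gen i

/-- A causal (online) policy: its decisions up to time `t` depend only on the
information available by time `t`. -/
def Causal {pr : Params} (π : Policy pr) : Prop :=
  ∀ σ σ' t, AgreeUpTo pr σ σ' t →
    ∀ u, u ≤ t → (π σ).speed u = (π σ').speed u ∧ (π σ).assign u = (π σ').assign u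

/-- A feasible policy satisfies the peak-AoI constraint on every instance. -/
def FeasiblePolicy {pr : Params} (π : Policy pr) : Prop := ∀ σ, (π σ).Feasible

/-- An optimal offline policy: feasible, and on every instance it consumes no more
energy than any other feasible schedule (it knows all generation times in advance). -/
def OffOpt {pr : Params} (π : Policy pr) : Prop :=
  FeasiblePolicy π ∧
  ∀ (σ : Arrivals pr) (S : Schedule pr σ), S.Feasible → (π σ).energy ≤ S.energy

/-- A greedy policy: causal and following the greedy rule on every instance. -/
def GreedyPolicy {pr : Params} (π : Policy pr) : Prop :=
  Causal π ∧ ∀ σ, (π σ).IsGreedy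

namespace Schedule

variable {pr : Params} {σ : Arrivals pr} (S : Schedule pr σ)

lemma gspeed_pos (t : ℝ) : 0 < S.gspeed t :=
  lt_max_of_lt_right (div_pos (mul_pos three_pos pr.hW) pr.hD)

def finish (r : ℝ) : ℝ := r + pr.W / S.gspeed r

lemma lt_finish (r : ℝ) : r < S.finish r :=
  lt_add_of_pos_right r (div_pos pr.hW (S.gspeed_pos r))

lemma finish_le_add_third (r : ℝ) : S.finish r ≤ r + pr.D / 3 := by
  have h3 : 3 * pr.W ≤ S.gspeed r * pr.D := (div_le_iff₀ pr.hD).1 (le_max_right _ _)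
  have hdur : pr.W / S.gspeed r ≤ pr.D / 3 := by
    rw [div_le_div_iff₀ (S.gspeed_pos r) three_pos]
    linarith
  unfold finish
  linarith

variable {S}

lemma gspeed_eq_of_lt {r : ℝ} (h : 3 * pr.W / pr.D < S.gspeed r) :
    S.gspeed r = pr.W / (S.deadline r - r) :=
  (max_choice _ _).resolve_right h.ne'

lemma deadline_mem_Ioo_of_lt_gspeed {r : ℝ} (h : 3 * pr.W / pr.D < S.gspeed r) :
    S.deadline r ∈ Ioo r (r + pr.D / 3) := by
  have hW := pr.hW
  have hD := pr.hD
  rw [gspeed_eq_of_lt h] at h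
  have hpos : 0 < S.deadline r - r := by
    by_contra! hle
    have : pr.W / (S.deadline r - r) ≤ 0 := div_nonpos_of_nonneg_of_nonpos hW.le hle
    linarith [div_pos (mul_pos three_pos hW) hD]
  rw [div_lt_div_iff₀ hD hpos] at h
  constructor <;> nlinarith

lemma StartsAt.unique {i : ℕ} {a b : ℝ} (ha : S.StartsAt i a) (hb : S.StartsAt i b) :
    a = b := by
  by_contra hne
  rcases lt_or_gt_of_ne hne with h | h
  · exact hb.2 a h ha.1
  · exact ha.2 b h hb.1

lemma txSpeed_eq_zero_of_not_transmits {i : ℕ} (h : ¬ S.Transmits i) : S.txSpeed i = 0 := by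
  funext u
  simp only [txSpeed, Pi.zero_apply, ite_eq_right_iff]
  exact fun hu => absurd ⟨u, hu⟩ h

lemma bitsIn_nonneg (i : ℕ) {s t : ℝ} (h : s ≤ t) : 0 ≤ S.bitsIn i s t :=
  intervalIntegral.integral_nonneg h fun u _ => by
    unfold txSpeed
    split_ifs
    exacts [S.speed_nonneg u, le_rfl]

lemma bits_eq_zero_of_le_startsAt {i : ℕ} {r t : ℝ} (h : S.StartsAt i r) (ht : t ≤ r) :
    S.bits i t = 0 := by
  have h0r : 0 ≤ r := (σ.gen_nonneg i).trans (S.assign_after_gen r i h.1)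
  unfold bits bitsIn
  rw [intervalIntegral.integral_congr_uIoo (g := fun _ => 0) ?_, intervalIntegral.integral_zero]
  intro u hu
  simp [txSpeed, h.2 u (hu.2.trans_le (sup_le h0r ht))]

lemma not_delivered_of_le_startsAt {i : ℕ} {r t : ℝ} (h : S.StartsAt i r) (ht : t ≤ r) :
    ¬ S.Delivered i t := by
  unfold Delivered
  rw [bits_eq_zero_of_le_startsAt h ht]
  exact not_le.2 pr.hW

namespace IsGreedy

lemma assign_eq_some_iff (hS : S.IsGreedy) {i : ℕ} {r u : ℝ} (h : S.StartsAt i r) :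
    S.assign u = some i ↔ u ∈ Ico r (S.finish r) := by
  refine ⟨fun hu => ?_, fun hu => ((hS.2.1 i r h).2.2.2 u hu.1 hu.2).1⟩
  obtain ⟨r', hr', hru, hue⟩ := hS.2.2 u i hu
  obtain rfl := hr'.unique h
  exact ⟨hru, hue⟩

lemma speed_eq (hS : S.IsGreedy) {i : ℕ} {r u : ℝ} (h : S.StartsAt i r)
    (hu : u ∈ Ico r (S.finish r)) : S.speed u = S.gspeed r :=
  ((hS.2.1 i r h).2.2.2 u hu.1 hu.2).2

lemma exists_startsAt (hS : S.IsGreedy) {i : ℕ} (h : S.Transmits i) : ∃ r, S.StartsAt i r :=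
  let ⟨u, hu⟩ := h
  let ⟨r, hr, _⟩ := hS.2.2 u i hu
  ⟨r, hr⟩

lemma txSpeed_eq_indicator (hS : S.IsGreedy) {i : ℕ} {r : ℝ} (h : S.StartsAt i r) :
    S.txSpeed i = (Ico r (S.finish r)).indicator fun _ => S.gspeed r := by
  funext u
  by_cases hu : u ∈ Ico r (S.finish r)
  · rw [indicator_of_mem hu, txSpeed, if_pos ((hS.assign_eq_some_iff h).2 hu),
      hS.speed_eq h hu]
  · rw [indicator_of_notMem hu, txSpeed, if_neg (mt (hS.assign_eq_some_iff h).1 hu)]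

lemma intervalIntegrable_txSpeed (hS : S.IsGreedy) (i : ℕ) (a b : ℝ) :
    IntervalIntegrable (S.txSpeed i) volume a b := by
  by_cases hi : S.Transmits i
  · obtain ⟨r, hr⟩ := hS.exists_startsAt hi
    rw [hS.txSpeed_eq_indicator hr]
    exact ((integrable_indicator_iff measurableSet_Ico).2
      (integrableOn_const measure_Ico_lt_top.ne)).intervalIntegrable
  · rw [txSpeed_eq_zero_of_not_transmits hi]
    exact intervalIntegrable_const

lemma bits_add_bitsIn (hS : S.IsGreedy) (i : ℕ) (s t : ℝ) :
    S.bits i s + S.bitsIn i s t = S.bits i t :=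
  intervalIntegral.integral_add_adjacent_intervals
    (hS.intervalIntegrable_txSpeed i 0 s) (hS.intervalIntegrable_txSpeed i s t)

lemma bits_mono (hS : S.IsGreedy) (i : ℕ) : Monotone (S.bits i) := fun s t h => by
  linarith [hS.bits_add_bitsIn i s t, S.bitsIn_nonneg i h]

lemma bitsIn_startsAt_finish (hS : S.IsGreedy) {i : ℕ} {r : ℝ} (h : S.StartsAt i r) :
    S.bitsIn i r (S.finish r) = pr.W := by
  unfold bitsIn
  rw [intervalIntegral.integral_congr_uIoo (g := fun _ => S.gspeed r) ?_,
    intervalIntegral.integral_const, smul_eq_mul, finish, add_sub_cancel_left,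
    div_mul_cancel₀ _ (S.gspeed_pos r).ne']
  intro u hu
  rw [uIoo_of_lt (S.lt_finish r)] at hu
  rw [txSpeed, if_pos ((hS.assign_eq_some_iff h).2 (Ioo_subset_Ico_self hu)),
    hS.speed_eq h (Ioo_subset_Ico_self hu)]

lemma delivered_finish (hS : S.IsGreedy) {i : ℕ} {r : ℝ} (h : S.StartsAt i r) :
    S.Delivered i (S.finish r) := by
  unfold Delivered
  rw [← hS.bits_add_bitsIn i r, bits_eq_zero_of_le_startsAt h le_rfl,
    hS.bitsIn_startsAt_finish h, zero_add]

lemma delivered_mono (hS : S.IsGreedy) {i : ℕ} {s t : ℝ} (hst : s ≤ t)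
    (h : S.Delivered i s) : S.Delivered i t :=
  h.trans (hS.bits_mono i hst)

lemma gen_lt_of_delivered (hS : S.IsGreedy) {i : ℕ} {t : ℝ} (h : S.Delivered i t) :
    σ.gen i < t := by
  by_cases hi : S.Transmits i
  · obtain ⟨r, hr⟩ := hS.exists_startsAt hi
    exact (S.assign_after_gen r i hr.1).trans_lt
      (lt_of_not_ge fun hle => not_delivered_of_le_startsAt hr hle h)
  · refine absurd h (not_le.2 ?_)
    simp [bits, bitsIn, txSpeed_eq_zero_of_not_transmits hi, pr.hW]

lemma bddAbove_latest (hS : S.IsGreedy) (t : ℝ) :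
    BddAbove (insert (-σ.Δ0) {x | ∃ i, S.Delivered i t ∧ x = σ.gen i}) := by
  refine ⟨max (-σ.Δ0) t, ?_⟩
  rintro x (rfl | ⟨i, hi, rfl⟩)
  · exact le_max_left _ _
  · exact le_max_of_le_right (hS.gen_lt_of_delivered hi).le

lemma gen_le_latest (hS : S.IsGreedy) {i : ℕ} {t : ℝ} (h : S.Delivered i t) :
    σ.gen i ≤ S.latest t :=
  le_csSup (hS.bddAbove_latest t) (mem_insert_of_mem _ ⟨i, h, rfl⟩)

lemma latest_mono (hS : S.IsGreedy) : Monotone S.latest := fun _ t hst =>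
  csSup_le_csSup (hS.bddAbove_latest t) (insert_nonempty _ _)
    (insert_subset_insert fun _ ⟨i, hi, hx⟩ => ⟨i, hS.delivered_mono hst hi, hx⟩)

lemma available_of_startsAt (hS : S.IsGreedy) {k : ℕ} {rk u : ℝ} (hk : S.StartsAt k rk)
    (hu : σ.gen k ≤ u) (hur : u ≤ rk) : S.Available k u :=
  ⟨⟨hu, (hS.latest_mono hur).trans_lt (hS.2.1 k rk hk).2.1.1.2⟩,
    not_delivered_of_le_startsAt hk hur⟩

lemma exists_startsAt_covering (hS : S.IsGreedy) {k : ℕ} {rk u : ℝ} (hk : S.StartsAt k rk)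
    (hrkT : rk ≤ σ.T) (hu : σ.gen k ≤ u) (hur : u < rk) :
    ∃ m rm, S.StartsAt m rm ∧ rm < σ.gen k ∧ u ∈ Ico rm (S.finish rm) ∧ S.finish rm ≤ rk := by
  obtain ⟨hdT, ⟨⟨-, hlat⟩, -⟩, -, -⟩ := hS.2.1 k rk hk
  have hdu : S.deadline u ≤ σ.T := by
    unfold deadline at hdT ⊢
    linarith [hS.latest_mono hur.le]
  obtain ⟨m, hm⟩ := Option.ne_none_iff_exists'.1 fun hidle =>
    hS.1 u ((σ.gen_nonneg k).trans hu) (hur.le.trans hrkT) hidle hdu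
      ⟨k, hS.available_of_startsAt hk hu hur.le⟩
  obtain ⟨rm, hrm⟩ := hS.exists_startsAt ⟨u, hm⟩
  have hum := (hS.assign_eq_some_iff hrm).1 hm
  have hfin : S.finish rm ≤ rk := by
    by_contra! hlt
    have hmk : m = k := Option.some_inj.1
      (((hS.assign_eq_some_iff hrm).2 ⟨hum.1.trans hur.le, hlt⟩).symm.trans hk.1)
    subst hmk
    exact (hrm.unique hk ▸ hum.1).not_gt hur
  refine ⟨m, rm, hrm, ?_, hum, hfin⟩
  by_contra! hgen
  have hkm := (hS.2.1 m rm hrm).2.2.1 k (hS.available_of_startsAt hk hgen (hum.1.trans hur.le))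
  have hmk := hS.gen_le_latest (hS.delivered_mono hfin (hS.delivered_finish hrm))
  linarith

lemma startsAt_le_gen_add_third (hS : S.IsGreedy) {k : ℕ} {rk : ℝ} (hk : S.StartsAt k rk)
    (hrkT : rk ≤ σ.T) : rk ≤ σ.gen k + pr.D / 3 := by
  by_contra! hlate
  obtain ⟨m, rm, -, hrm, hu, -⟩ :=
    hS.exists_startsAt_covering hk hrkT (le_add_of_nonneg_right (by linarith [pr.hD])) hlate
  linarith [hu.2, S.finish_le_add_third rm]

lemma startsAt_eq_gen (hS : S.IsGreedy) {j : ℕ} {r : ℝ} (hj : S.StartsAt j r)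
    (hd : S.deadline r ∈ Ioo r (r + pr.D / 3)) : r = σ.gen j := by
  obtain ⟨hdT, ⟨⟨hgen, -⟩, -⟩, -, -⟩ := hS.2.1 j r hj
  by_contra hne
  have hlat : S.latest r + 2 * pr.D / 3 < r := by
    have := hd.2
    unfold deadline at this
    linarith
  obtain ⟨u, hu, hur⟩ := exists_between (max_lt (lt_of_le_of_ne hgen (Ne.symm hne)) hlat)
  rw [max_lt_iff] at hu
  obtain ⟨i, r', hi, -, hu', hfin⟩ :=
    hS.exists_startsAt_covering hj (hd.1.le.trans hdT) hu.1.le hur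
  have hgen_i := hS.gen_le_latest (hS.delivered_mono hfin (hS.delivered_finish hi))
  have hstart := hS.startsAt_le_gen_add_third hi (by linarith [hu'.1, hd.1, hdT])
  linarith [hu'.2, S.finish_le_add_third r']

end IsGreedy

end Schedule

/-- Corollary 3: if the greedy policy transmits a packet `j` at
speed strictly greater than `3W/D`, then it begins transmitting packet `j`
immediately at its generation time `t_j` and transmits it at the constant speed
`W/(d(t_j) - t_j)` over the whole interval `[t_j, d(t_j))`, completing exactly at
the deadline `d(t_j)`. -/
theorem greedy_fast_implies_immediate_transmission (pr : Params)
    (σ : Arrivals pr) (S : Schedule pr σ) (hS : S.IsGreedy) (j : ℕ) (t : ℝ)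
    (ht : S.assign t = some j) (hfast : 3 * pr.W / pr.D < S.speed t) :
    S.StartsAt j (σ.gen j) ∧
    S.gspeed (σ.gen j) = pr.W / (S.deadline (σ.gen j) - σ.gen j) ∧
    (∀ u, σ.gen j ≤ u → u < S.deadline (σ.gen j) →
      S.assign u = some j ∧
      S.speed u = pr.W / (S.deadline (σ.gen j) - σ.gen j)) ∧
    S.Delivered j (S.deadline (σ.gen j)) := by
  obtain ⟨r, hr⟩ := hS.exists_startsAt ⟨t, ht⟩
  have hfast_r : 3 * pr.W / pr.D < S.gspeed r :=
    hS.speed_eq hr ((hS.assign_eq_some_iff hr).1 ht) ▸ hfast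
  have hg := Schedule.gspeed_eq_of_lt hfast_r
  rw [← hS.startsAt_eq_gen hr (Schedule.deadline_mem_Ioo_of_lt_gspeed hfast_r)]
  have hfin : S.finish r = S.deadline r := by
    rw [Schedule.finish, hg, div_div_cancel₀ pr.hW.ne', add_sub_cancel]
  refine ⟨hr, hg, fun u hu hud => ?_, hfin ▸ hS.delivered_finish hr⟩
  have hu_mem : u ∈ Ico r (S.finish r) := ⟨hu, hfin ▸ hud⟩
  exact ⟨(hS.assign_eq_some_iff hr).2 hu_mem, (hS.speed_eq hr hu_mem).trans hg⟩
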